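/- Let λ be a positive integer, k = k₊ + k₋ with k₊, k₋ ≥ 1, and let S^1 act on ℂ^{k₊} × ℂ^{k₋} by z · (u, v) = (z^λ u, z^{-λ} v) (i.e., z^λ acting diagonally on the first factor and z^{-λ} on the second). Let Z := {[l] ∈ ℂP^{k-1} : λ(|l_1|² + … + |l_{k₊}|²) − λ(|l_{k₊+1}|² + … + |l_k|²) = 0}, with the induced S^1-action z·[l_1:…:l_k] = [z^λ l_1 : … : z^λ l_{k₊} : z^{-λ} l_{k₊+1} : … : z^{-λ} l_k]. Let S^+ ⊂ ℂ^{k₊} and S^- ⊂ ℂ^{k₋} be the unit spheres {Σ λ|u_i|² = 1} and {Σ λ|v_i|² = 1} with the induced S^1-actions u ↦ z^λ u and v ↦ z^{-λ} v. Then the map sending the S^1-orbit of [l_1:…:l_k] ∈ Z to the pair of orbits (S^1·(l_1,…,l_{k₊})/√Q, S^1·(l_{k₊+1},…,l_k)/√Q), where Q := λ Σ_{i≤k₊}|l_i|², is a well-defined bijection Z/S^1 → (S^+/S^1) × (S^- /S^1). -/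
import Mathlib

open scoped BigOperators

/-- The weight vector `(λ, …, λ, -λ, …, -λ)` with `k₊` positive and `k₋` negative entries. -/
def wtv (kp km lam : ℕ) : Fin (kp + km) → ℤ :=
  fun i => if (i : ℕ) < kp then (lam : ℤ) else -(lam : ℤ)

/-- Nonzero representatives of points of the projective quadric
`Z = {[l] ∈ ℂP^{k-1} : λ(|l₁|²+…+|l_{k₊}|²) - λ(|l_{k₊+1}|²+…+|l_k|²) = 0}`. -/
def ZRep (kp km lam : ℕ) : Type :=
  {l : Fin (kp + km) → ℂ // l ≠ 0 ∧ ∑ i, ((wtv kp km lam i : ℤ) : ℝ) * ‖l i‖ ^ 2 = 0}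

/-- Two representatives define the same point of `Z/S¹`: they differ by projective scaling
and the weighted `S¹`-action. -/
def zRel (kp km lam : ℕ) : ZRep kp km lam → ZRep kp km lam → Prop :=
  fun l l' => ∃ w z : ℂ, w ≠ 0 ∧ ‖z‖ = 1 ∧
    ∀ i, l'.1 i = w * z ^ (wtv kp km lam i) * l.1 i

/-- The weighted sphere `S⁺ = {u ∈ ℂ^{k₊} : ∑ λ|uᵢ|² = 1}`. -/
def SpRep (kp lam : ℕ) : Type := {u : Fin kp → ℂ // ∑ i, (lam : ℝ) * ‖u i‖ ^ 2 = 1}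

/-- Orbit relation on `S⁺` for the action `u ↦ z^λ u`. -/
def spRel (kp lam : ℕ) : SpRep kp lam → SpRep kp lam → Prop :=
  fun u u' => ∃ z : ℂ, ‖z‖ = 1 ∧ ∀ i, u'.1 i = z ^ lam * u.1 i

/-- The weighted sphere `S⁻ = {v ∈ ℂ^{k₋} : ∑ λ|vⱼ|² = 1}`. -/
def SmRep (km lam : ℕ) : Type := {v : Fin km → ℂ // ∑ j, (lam : ℝ) * ‖v j‖ ^ 2 = 1}

/-- Orbit relation on `S⁻` for the action `v ↦ z^{-λ} v`. -/
def smRel (km lam : ℕ) : SmRep km lam → SmRep km lam → Prop :=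
  fun v v' => ∃ z : ℂ, ‖z‖ = 1 ∧ ∀ j, v'.1 j = z ^ (-(lam : ℤ)) * v.1 j

/- ### Auxiliary material -/

section Aux

variable (kp km lam : ℕ)

lemma wtv_castAdd (i : Fin kp) : wtv kp km lam (Fin.castAdd km i) = (lam : ℤ) := by
  simp [wtv, i.isLt]

lemma wtv_natAdd (j : Fin km) : wtv kp km lam (Fin.natAdd kp j) = -(lam : ℤ) := by
  simp only [wtv, Fin.coe_natAdd]
  rw [if_neg (by omega)]

/-- The quantity `Q = λ ∑_{i ≤ k₊} |lᵢ|²`. -/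
noncomputable def bQ (l : Fin (kp + km) → ℂ) : ℝ :=
  ∑ i : Fin kp, (lam : ℝ) * ‖l (Fin.castAdd km i)‖ ^ 2

lemma bQ_eq_minus (l : ZRep kp km lam) :
    (∑ j : Fin km, (lam : ℝ) * ‖l.1 (Fin.natAdd kp j)‖ ^ 2) = bQ kp km lam l.1 := by
  have h := l.2.2
  rw [Fin.sum_univ_add] at h
  simp only [wtv_castAdd, wtv_natAdd, Int.cast_natCast, Int.cast_neg, neg_mul,
    Finset.sum_neg_distrib] at h
  unfold bQ
  linarith

lemma bQ_pos (hlam : 0 < lam) (l : ZRep kp km lam) : 0 < bQ kp km lam l.1 := by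
  rcases (Finset.sum_nonneg fun i _ => by positivity :
      (0:ℝ) ≤ bQ kp km lam l.1).lt_or_eq with h | h
  · exact h
  exfalso
  have hz : ∀ i : Fin kp, l.1 (Fin.castAdd km i) = 0 := by
    intro i
    have := (Finset.sum_eq_zero_iff_of_nonneg (fun i _ => by positivity)).1 h.symm i
      (Finset.mem_univ i)
    have h2 : ‖l.1 (Fin.castAdd km i)‖ ^ 2 = 0 :=
      (mul_eq_zero.1 this).resolve_left (by positivity)
    have := pow_eq_zero_iff (two_ne_zero) |>.1 h2
    simpa using this
  have hm : (∑ j : Fin km, (lam : ℝ) * ‖l.1 (Fin.natAdd kp j)‖ ^ 2) = 0 := by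
    rw [bQ_eq_minus]; exact h.symm
  have hz' : ∀ j : Fin km, l.1 (Fin.natAdd kp j) = 0 := by
    intro j
    have := (Finset.sum_eq_zero_iff_of_nonneg (fun j _ => by positivity)).1 hm j
      (Finset.mem_univ j)
    have h2 : ‖l.1 (Fin.natAdd kp j)‖ ^ 2 = 0 :=
      (mul_eq_zero.1 this).resolve_left (by positivity)
    have := pow_eq_zero_iff (two_ne_zero) |>.1 h2
    simpa using this
  exact l.2.1 (funext fun i => Fin.addCases hz hz' i)

/-- Existence of `n`-th roots on the circle. -/
lemma exists_circle_root (n : ℕ) (hn : n ≠ 0) (w : ℂ) (hw : ‖w‖ = 1) :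
    ∃ c : ℂ, ‖c‖ = 1 ∧ c ^ n = w := by
  obtain ⟨c, hc⟩ := IsAlgClosed.exists_pow_nat_eq w (Nat.pos_of_ne_zero hn)
  refine ⟨c, ?_, hc⟩
  have hnc : ‖c‖ ^ n = 1 := by rw [← norm_pow, hc, hw]
  rcases lt_trichotomy ‖c‖ 1 with h | h | h
  · have := pow_lt_one₀ (norm_nonneg c) h hn
    linarith
  · exact h
  · have := one_lt_pow₀ h hn
    linarith

variable (hlam : 0 < lam)

/-- Forward map, first component. -/
noncomputable def fwdU (l : ZRep kp km lam) : SpRep kp lam := by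
  refine ⟨fun i => l.1 (Fin.castAdd km i) / ((Real.sqrt (bQ kp km lam l.1) : ℝ) : ℂ), ?_⟩
  have hQ := bQ_pos kp km lam hlam l
  have : ∀ i : Fin kp,
      (lam : ℝ) * ‖l.1 (Fin.castAdd km i) / ((Real.sqrt (bQ kp km lam l.1) : ℝ) : ℂ)‖ ^ 2
        = ((lam : ℝ) * ‖l.1 (Fin.castAdd km i)‖ ^ 2) / bQ kp km lam l.1 := by
    intro i
    rw [norm_div, div_pow, Complex.norm_real, Real.norm_of_nonneg (Real.sqrt_nonneg _),
      Real.sq_sqrt hQ.le, mul_div_assoc]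
  rw [Finset.sum_congr rfl fun i _ => this i, ← Finset.sum_div]
  exact div_self hQ.ne'

/-- Forward map, second component. -/
noncomputable def fwdV (l : ZRep kp km lam) : SmRep km lam := by
  refine ⟨fun j => l.1 (Fin.natAdd kp j) / ((Real.sqrt (bQ kp km lam l.1) : ℝ) : ℂ), ?_⟩
  have hQ := bQ_pos kp km lam hlam l
  have : ∀ j : Fin km,
      (lam : ℝ) * ‖l.1 (Fin.natAdd kp j) / ((Real.sqrt (bQ kp km lam l.1) : ℝ) : ℂ)‖ ^ 2
        = ((lam : ℝ) * ‖l.1 (Fin.natAdd kp j)‖ ^ 2) / bQ kp km lam l.1 := by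
    intro j
    rw [norm_div, div_pow, Complex.norm_real, Real.norm_of_nonneg (Real.sqrt_nonneg _),
      Real.sq_sqrt hQ.le, mul_div_assoc]
  rw [Finset.sum_congr rfl fun j _ => this j, ← Finset.sum_div, bQ_eq_minus]
  exact div_self hQ.ne'

/-- The backward map. -/
noncomputable def bwd (u : SpRep kp lam) (v : SmRep km lam) : ZRep kp km lam := by
  refine ⟨Fin.append u.1 v.1, ?_, ?_⟩
  · intro h0
    have hu0 : ∀ i : Fin kp, u.1 i = 0 := by
      intro i
      have := congrFun h0 (Fin.castAdd km i)
      rwa [Fin.append_left] at this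
    have := u.2
    simp [hu0] at this
  · rw [Fin.sum_univ_add]
    simp only [Fin.append_left, Fin.append_right, wtv_castAdd, wtv_natAdd,
      Int.cast_natCast, Int.cast_neg, neg_mul, Finset.sum_neg_distrib]
    rw [u.2, v.2]
    ring

lemma fwd_sound {l l' : ZRep kp km lam} (h : zRel kp km lam l l') :
    (Quot.mk (spRel kp lam) (fwdU kp km lam hlam l),
      Quot.mk (smRel km lam) (fwdV kp km lam hlam l))
    = (Quot.mk (spRel kp lam) (fwdU kp km lam hlam l'),
      Quot.mk (smRel km lam) (fwdV kp km lam hlam l')) := by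
  obtain ⟨w, z, hw, hz, hrel⟩ := h
  have hzlam : ‖z ^ lam‖ = 1 := by rw [norm_pow, hz, one_pow]
  have hQ := bQ_pos kp km lam hlam l
  have hQ' : bQ kp km lam l'.1 = ‖w‖ ^ 2 * bQ kp km lam l.1 := by
    unfold bQ
    rw [Finset.mul_sum]
    refine Finset.sum_congr rfl fun i _ => ?_
    rw [hrel (Fin.castAdd km i), wtv_castAdd, zpow_natCast]
    rw [norm_mul, norm_mul, hzlam, mul_one, mul_pow]
    ring
  have hsq : Real.sqrt (bQ kp km lam l'.1) = ‖w‖ * Real.sqrt (bQ kp km lam l.1) := by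
    rw [hQ', Real.sqrt_mul (sq_nonneg _), Real.sqrt_sq (norm_nonneg w)]
  have hwn : (‖w‖ : ℂ) ≠ 0 := by
    simpa using norm_ne_zero_iff.2 hw
  have hsn : ((Real.sqrt (bQ kp km lam l.1) : ℝ) : ℂ) ≠ 0 := by
    simp only [ne_eq, Complex.ofReal_eq_zero]
    exact (Real.sqrt_pos.2 hQ).ne'
  set ω : ℂ := w / (‖w‖ : ℂ) with hω
  have hωn : ‖ω‖ = 1 := by
    rw [hω, norm_div, Complex.norm_real, norm_norm,
      div_self (norm_ne_zero_iff.2 hw)]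
  rw [Prod.mk.injEq]
  constructor
  · -- sphere S⁺
    obtain ⟨c, hc1, hclam⟩ := exists_circle_root lam hlam.ne' ω hωn
    apply Quot.sound
    refine ⟨c * z, by rw [norm_mul, hc1, hz, one_mul], fun i => ?_⟩
    show l'.1 (Fin.castAdd km i) / ((Real.sqrt (bQ kp km lam l'.1) : ℝ) : ℂ)
      = (c * z) ^ lam * (l.1 (Fin.castAdd km i) / ((Real.sqrt (bQ kp km lam l.1) : ℝ) : ℂ))
    rw [hrel (Fin.castAdd km i), wtv_castAdd, zpow_natCast, hsq, mul_pow, hclam, hω]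
    push_cast
    field_simp
  · -- sphere S⁻
    obtain ⟨d, hd1, hdlam⟩ := exists_circle_root lam hlam.ne' ω⁻¹
      (by rw [norm_inv, hωn, inv_one])
    apply Quot.sound
    refine ⟨d * z, by rw [norm_mul, hd1, hz, one_mul], fun j => ?_⟩
    show l'.1 (Fin.natAdd kp j) / ((Real.sqrt (bQ kp km lam l'.1) : ℝ) : ℂ)
      = (d * z) ^ (-(lam : ℤ)) * (l.1 (Fin.natAdd kp j) / ((Real.sqrt (bQ kp km lam l.1) : ℝ) : ℂ))
    have hωz : ω ≠ 0 := by
      intro h0; rw [h0] at hωn; simp at hωn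
    have hzz : z ≠ 0 := by
      intro h0; rw [h0] at hz; simp at hz
    have hdz : d ≠ 0 := by
      intro h0; rw [h0] at hd1; simp at hd1
    rw [hrel (Fin.natAdd kp j), wtv_natAdd, hsq]
    rw [zpow_neg, zpow_natCast, zpow_neg, zpow_natCast, mul_pow, hdlam]
    rw [hω]
    push_cast
    field_simp
end Aux

/-- Proposition 3.9 (bisphere): when all weights have the same absolute value `λ`, the map
`S¹·[l] ↦ (S¹·(l₁,…,l_{k₊})/√Q, S¹·(l_{k₊+1},…,l_k)/√Q)`, `Q = λ ∑_{i ≤ k₊} |lᵢ|²`, is a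
well-defined bijection `ℂP^{k-1}_{λ,F} ⫽ S¹ → (S⁺/S¹) × (S⁻/S¹)`. -/
theorem bisphere_bijection (kp km lam : ℕ) (hlam : 0 < lam) (hkp : 1 ≤ kp) (hkm : 1 ≤ km) :
    ∃ e : Quot (zRel kp km lam) ≃ Quot (spRel kp lam) × Quot (smRel km lam),
      ∀ (l : ZRep kp km lam) (u : SpRep kp lam) (v : SmRep km lam),
        (∀ i : Fin kp, u.1 i = l.1 (Fin.castAdd km i) /
          (Real.sqrt (∑ i' : Fin kp, (lam : ℝ) * ‖l.1 (Fin.castAdd km i')‖ ^ 2) : ℂ)) →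
        (∀ j : Fin km, v.1 j = l.1 (Fin.natAdd kp j) /
          (Real.sqrt (∑ i' : Fin kp, (lam : ℝ) * ‖l.1 (Fin.castAdd km i')‖ ^ 2) : ℂ)) →
        e (Quot.mk _ l) = (Quot.mk _ u, Quot.mk _ v) := by
  -- well-definedness of the backward map
  have bwd_rel : ∀ (u u' : SpRep kp lam) (v v' : SmRep km lam),
      spRel kp lam u u' → smRel km lam v v' →
      zRel kp km lam (bwd kp km lam u v) (bwd kp km lam u' v') := by
    intro u u' v v' ⟨ζ, hζ1, hζ⟩ ⟨ξ, hξ1, hξ⟩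
    obtain ⟨z, hz1, hz2⟩ := exists_circle_root 2 two_ne_zero (ζ * ξ)
      (by rw [norm_mul, hζ1, hξ1, one_mul])
    have hζ0 : ζ ≠ 0 := by intro h0; rw [h0] at hζ1; simp at hζ1
    have hξ0 : ξ ≠ 0 := by intro h0; rw [h0] at hξ1; simp at hξ1
    have hz0 : z ≠ 0 := by intro h0; rw [h0] at hz1; simp at hz1
    refine ⟨ζ ^ lam / z ^ lam, z, by
      exact div_ne_zero (pow_ne_zero _ hζ0) (pow_ne_zero _ hz0), hz1, fun i => ?_⟩
    have hzz : (z ^ lam) ^ 2 = ζ ^ lam * ξ ^ lam := by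
      rw [← pow_mul, mul_comm lam 2, pow_mul, hz2, mul_pow]
    refine Fin.addCases (fun i => ?_) (fun j => ?_) i
    · show Fin.append u'.1 v'.1 (Fin.castAdd km i)
        = ζ ^ lam / z ^ lam * z ^ (wtv kp km lam (Fin.castAdd km i))
          * Fin.append u.1 v.1 (Fin.castAdd km i)
      rw [Fin.append_left, Fin.append_left, wtv_castAdd, zpow_natCast, hζ i]
      field_simp
    · show Fin.append u'.1 v'.1 (Fin.natAdd kp j)
        = ζ ^ lam / z ^ lam * z ^ (wtv kp km lam (Fin.natAdd kp j))
          * Fin.append u.1 v.1 (Fin.natAdd kp j)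
      rw [Fin.append_right, Fin.append_right, wtv_natAdd, hξ j]
      rw [zpow_neg, zpow_natCast, zpow_neg, zpow_natCast]
      have key : ζ ^ lam / z ^ lam * (z ^ lam)⁻¹ = (ξ ^ lam)⁻¹ := by
        rw [div_eq_mul_inv, mul_assoc, ← mul_inv, ← pow_two, hzz, mul_inv, ← mul_assoc,
          mul_inv_cancel₀ (pow_ne_zero _ hζ0), one_mul]
      rw [key]
  -- the forward and backward maps on quotients
  let F : Quot (zRel kp km lam) → Quot (spRel kp lam) × Quot (smRel km lam) :=
    Quot.lift (fun l => (Quot.mk _ (fwdU kp km lam hlam l), Quot.mk _ (fwdV kp km lam hlam l)))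
      (fun l l' h => fwd_sound kp km lam hlam h)
  let G : Quot (spRel kp lam) × Quot (smRel km lam) → Quot (zRel kp km lam) :=
    fun p => Quot.lift₂ (fun u v => Quot.mk _ (bwd kp km lam u v))
      (fun u v v' hv => Quot.sound (bwd_rel u u v v' ⟨1, norm_one, by simp⟩ hv))
      (fun u u' v hu => Quot.sound (bwd_rel u u' v v hu ⟨1, norm_one, by simp⟩))
      p.1 p.2
  have hGF : ∀ q, G (F q) = q := by
    intro q
    induction q using Quot.ind with
    | _ l =>
    have hQ := bQ_pos kp km lam hlam l
    have hsn : ((Real.sqrt (bQ kp km lam l.1) : ℝ) : ℂ) ≠ 0 := by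
      simp only [ne_eq, Complex.ofReal_eq_zero]
      exact (Real.sqrt_pos.2 hQ).ne'
    have hcomp : ∀ i, l.1 i = ((Real.sqrt (bQ kp km lam l.1) : ℝ) : ℂ)
        * (1 : ℂ) ^ (wtv kp km lam i)
        * (bwd kp km lam (fwdU kp km lam hlam l) (fwdV kp km lam hlam l)).1 i := by
      refine fun i => Fin.addCases (fun i => ?_) (fun j => ?_) i
      · show l.1 (Fin.castAdd km i) = _ * 1 ^ (wtv kp km lam (Fin.castAdd km i))
          * Fin.append (fwdU kp km lam hlam l).1 (fwdV kp km lam hlam l).1 (Fin.castAdd km i)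
        rw [Fin.append_left, one_zpow, mul_one]
        show l.1 (Fin.castAdd km i)
          = _ * (l.1 (Fin.castAdd km i) / ((Real.sqrt (bQ kp km lam l.1) : ℝ) : ℂ))
        field_simp
      · show l.1 (Fin.natAdd kp j) = _ * 1 ^ (wtv kp km lam (Fin.natAdd kp j))
          * Fin.append (fwdU kp km lam hlam l).1 (fwdV kp km lam hlam l).1 (Fin.natAdd kp j)
        rw [Fin.append_right, one_zpow, mul_one]
        show l.1 (Fin.natAdd kp j)
          = _ * (l.1 (Fin.natAdd kp j) / ((Real.sqrt (bQ kp km lam l.1) : ℝ) : ℂ))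
        field_simp
    have htest : F (Quot.mk (zRel kp km lam) l)
        = (Quot.mk (spRel kp lam) (fwdU kp km lam hlam l),
           Quot.mk (smRel km lam) (fwdV kp km lam hlam l)) := rfl
    have htest2 : G (Quot.mk (spRel kp lam) (fwdU kp km lam hlam l),
           Quot.mk (smRel km lam) (fwdV kp km lam hlam l))
        = Quot.mk (zRel kp km lam)
            (bwd kp km lam (fwdU kp km lam hlam l) (fwdV kp km lam hlam l)) := rfl
    rw [htest, htest2]
    exact Quot.sound (r := zRel kp km lam)
      ⟨((Real.sqrt (bQ kp km lam l.1) : ℝ) : ℂ), 1, hsn, norm_one, hcomp⟩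
  have hFG : ∀ p, F (G p) = p := by
    rintro ⟨qu, qv⟩
    induction qu using Quot.ind with
    | _ u =>
    induction qv using Quot.ind with
    | _ v =>
    show (Quot.mk (spRel kp lam) (fwdU kp km lam hlam (bwd kp km lam u v)),
        Quot.mk (smRel km lam) (fwdV kp km lam hlam (bwd kp km lam u v)))
      = (Quot.mk (spRel kp lam) u, Quot.mk (smRel km lam) v)
    have hQ1 : bQ kp km lam (bwd kp km lam u v).1 = 1 := by
      unfold bQ
      have : ∀ i : Fin kp, (bwd kp km lam u v).1 (Fin.castAdd km i) = u.1 i := by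
        intro i
        show Fin.append u.1 v.1 (Fin.castAdd km i) = u.1 i
        rw [Fin.append_left]
      rw [Finset.sum_congr rfl fun i _ => by rw [this i]]
      exact u.2
    have hsq1 : ((Real.sqrt (bQ kp km lam (bwd kp km lam u v).1) : ℝ) : ℂ) = 1 := by
      rw [hQ1, Real.sqrt_one, Complex.ofReal_one]
    have hu : fwdU kp km lam hlam (bwd kp km lam u v) = u := by
      apply Subtype.ext
      funext i
      show (bwd kp km lam u v).1 (Fin.castAdd km i)
        / ((Real.sqrt (bQ kp km lam (bwd kp km lam u v).1) : ℝ) : ℂ) = u.1 i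
      rw [hsq1, div_one]
      exact Fin.append_left u.1 v.1 i
    have hv : fwdV kp km lam hlam (bwd kp km lam u v) = v := by
      apply Subtype.ext
      funext j
      show (bwd kp km lam u v).1 (Fin.natAdd kp j)
        / ((Real.sqrt (bQ kp km lam (bwd kp km lam u v).1) : ℝ) : ℂ) = v.1 j
      rw [hsq1, div_one]
      exact Fin.append_right u.1 v.1 j
    rw [hu, hv]
  refine ⟨⟨F, G, hGF, hFG⟩, fun l u v hu hv => ?_⟩
  show (Quot.mk (spRel kp lam) (fwdU kp km lam hlam l),
      Quot.mk (smRel km lam) (fwdV kp km lam hlam l))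
    = (Quot.mk (spRel kp lam) u, Quot.mk (smRel km lam) v)
  have hu' : u = fwdU kp km lam hlam l := by
    apply Subtype.ext
    funext i
    rw [hu i]
    rfl
  have hv' : v = fwdV kp km lam hlam l := by
    apply Subtype.ext
    funext j
    rw [hv j]
    rfl
  rw [hu', hv']
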